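/- In the setting of the previous exact-ladder statement, the first map x ↦ (g(x), π(x)) is injective: if g(x) = 0 and π(x) = 0, then x = 0. -/

import Mathlib

theorem AddMonoidHom.eq_zero_of_mem_range_of_injective_comp {K G G' : Type*}
    [AddGroup K] [AddGroup G] [AddZeroClass G']
    (ι : K →+ G) (g : G →+ G') (hinj : Function.Injective (g.comp ι))
    {x : G} (hx : x ∈ ι.range) (hgx : g x = 0) : x = 0 := by
  obtain ⟨k, rfl⟩ := hx
  have hk : k = 0 := hinj (by simpa using hgx)
  rw [hk, map_zero]

theorem stmt_5_general {K G H G' : Type*}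
    [AddCommGroup K] [AddCommGroup G] [AddCommGroup H] [AddCommGroup G']
    (ι : K →+ G) (π : G →+ H) (ι' : K →+ G') (g : G →+ G')
    (h1 : ι.range = π.ker) (hι' : Function.Injective ι')
    (hcK : ∀ k : K, g (ι k) = ι' k) :
    ∀ x : G, g x = 0 → π x = 0 → x = 0 := by
  intro x hgx hπx
  have hcomp : g.comp ι = ι' := AddMonoidHom.ext hcK
  have hx : x ∈ ι.range := h1 ▸ hπx
  exact ι.eq_zero_of_mem_range_of_injective_comp g (hcomp ▸ hι') hx hgx

/-- Injectivity part of Corollary 2.4: in the commutative exact ladder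
`0 → K → G → H → L`, `0 → K → G' → H' → L` with vertical maps `id_K`, `g`, `h`,
`id_L`, where the composite `K → G → G'` is injective, the map
`x ↦ (g x, π x)` is injective. -/
theorem stmt_5 {K G H L G' H' : Type*}
    [AddCommGroup K] [AddCommGroup G] [AddCommGroup H] [AddCommGroup L]
    [AddCommGroup G'] [AddCommGroup H']
    (ι : K →+ G) (π : G →+ H) (d : H →+ L)
    (ι' : K →+ G') (ρ : G' →+ H') (d' : H' →+ L)
    (g : G →+ G') (h : H →+ H')
    (hι : Function.Injective ι) (h1 : ι.range = π.ker) (h2 : π.range = d.ker)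
    (hι' : Function.Injective ι') (h1' : ι'.range = ρ.ker) (h2' : ρ.range = d'.ker)
    (hcK : ∀ k : K, g (ι k) = ι' k)
    (hcGH : ∀ x : G, h (π x) = ρ (g x))
    (hcL : ∀ z : H, d' (h z) = d z) :
    ∀ x : G, g x = 0 → π x = 0 → x = 0 :=
  stmt_5_general ι π ι' g h1 hι' hcK
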